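/- (Lemma 1(b)) Let φ be the standard normal density and Φ the standard normal cdf. Fix ν > 0. Then the function z ↦ R(z,ν) = (φ(z−ν)·Φ(z+ν) − φ(z+ν)·Φ(z−ν)) / (φ(z+ν) − φ(z−ν)) is strictly monotonically increasing on (−∞, −ν/2); equivalently, for fixed ν the strangle's relative value R(δ,ν) is strictly increasing in δ on the practical domain ℬ. -/

import Mathlib

/-!
Since `φ' u = -u φ u`, the quotient rule applied to `R(·, ν)` produces the numerator
`2ν φ(z+ν) φ(z-ν) (Φ(z+ν) - Φ(z-ν))`, which is positive; the denominator `φ(z+ν) - φ(z-ν)`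
does not vanish for `z < 0`. Hence `R(·, ν)` is strictly increasing on all of `(-∞, 0)`.
-/

open MeasureTheory Real

/-- The standard normal density φ(u) = exp(-u²/2)/√(2π). -/
noncomputable def stdNormalPdf (u : ℝ) : ℝ := Real.exp (-u ^ 2 / 2) / Real.sqrt (2 * Real.pi)

/-- The standard normal cdf Φ(z) = ∫_{-∞}^z φ(u) du. -/
noncomputable def stdNormalCdf (z : ℝ) : ℝ := ∫ u in Set.Iic z, stdNormalPdf u

open Set

noncomputable def strangleRelativeValue (ν z : ℝ) : ℝ :=
  (stdNormalPdf (z - ν) * stdNormalCdf (z + ν) - stdNormalPdf (z + ν) * stdNormalCdf (z - ν)) /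
    (stdNormalPdf (z + ν) - stdNormalPdf (z - ν))

lemma stdNormalPdf_pos (u : ℝ) : 0 < stdNormalPdf u := by
  unfold stdNormalPdf
  positivity

lemma stdNormalPdf_lt_stdNormalPdf_iff {a b : ℝ} :
    stdNormalPdf a < stdNormalPdf b ↔ b ^ 2 < a ^ 2 := by
  unfold stdNormalPdf
  rw [div_lt_div_iff_of_pos_right (by positivity), exp_lt_exp]
  constructor <;> intro h <;> linarith

lemma continuous_stdNormalPdf : Continuous stdNormalPdf := by
  unfold stdNormalPdf
  fun_prop

lemma integrable_stdNormalPdf : Integrable stdNormalPdf := by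
  refine ((integrable_exp_neg_mul_sq (b := 1 / 2) (by norm_num)).div_const
    (√(2 * π))).congr (.of_forall fun u => ?_)
  simp only [stdNormalPdf]
  ring_nf

lemma hasDerivAt_stdNormalPdf (u : ℝ) : HasDerivAt stdNormalPdf (-u * stdNormalPdf u) u := by
  have hexp : HasDerivAt (fun u : ℝ => exp (-u ^ 2 / 2)) (exp (-u ^ 2 / 2) * -u) u :=
    (((hasDerivAt_pow 2 u).neg.div_const 2).congr_deriv (by ring)).exp
  exact (hexp.div_const _).congr_deriv (by unfold stdNormalPdf; ring)

lemma hasDerivAt_stdNormalCdf (z : ℝ) : HasDerivAt stdNormalCdf (stdNormalPdf z) z := by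
  have hsplit : ∀ x, stdNormalCdf 0 + ∫ u in (0 : ℝ)..x, stdNormalPdf u = stdNormalCdf x := by
    intro x
    rw [← intervalIntegral.integral_Iic_sub_Iic integrable_stdNormalPdf.integrableOn
      integrable_stdNormalPdf.integrableOn]
    unfold stdNormalCdf
    ring
  have hFTC : HasDerivAt (fun x => ∫ u in (0 : ℝ)..x, stdNormalPdf u) (stdNormalPdf z) z :=
    intervalIntegral.integral_hasDerivAt_right integrable_stdNormalPdf.intervalIntegrable
      continuous_stdNormalPdf.aestronglyMeasurable.stronglyMeasurableAtFilter
      continuous_stdNormalPdf.continuousAt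
  simpa only [hsplit] using hFTC.const_add (stdNormalCdf 0)

lemma stdNormalCdf_strictMono : StrictMono stdNormalCdf := by
  intro a b hab
  have hdiff : stdNormalCdf b - stdNormalCdf a = ∫ u in Ioc a b, stdNormalPdf u := by
    rw [stdNormalCdf, stdNormalCdf, intervalIntegral.integral_Iic_sub_Iic
      integrable_stdNormalPdf.integrableOn integrable_stdNormalPdf.integrableOn,
      intervalIntegral.integral_of_le hab.le]
  have hpos : 0 < ∫ u in Ioc a b, stdNormalPdf u := by
    rw [setIntegral_pos_iff_support_of_nonneg_ae (.of_forall fun u => (stdNormalPdf_pos u).le)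
      integrable_stdNormalPdf.integrableOn, Function.support_eq_univ
      fun u => (stdNormalPdf_pos u).ne', univ_inter]
    simpa using hab
  linarith

lemma hasDerivAt_strangleRelativeValue {ν z : ℝ}
    (h : stdNormalPdf (z + ν) ≠ stdNormalPdf (z - ν)) :
    HasDerivAt (strangleRelativeValue ν)
      (2 * ν * stdNormalPdf (z + ν) * stdNormalPdf (z - ν) *
          (stdNormalCdf (z + ν) - stdNormalCdf (z - ν)) /
        (stdNormalPdf (z + ν) - stdNormalPdf (z - ν)) ^ 2) z := by
  have hp := (hasDerivAt_stdNormalPdf (z + ν)).comp_add_const z ν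
  have hq := (hasDerivAt_stdNormalPdf (z - ν)).comp_sub_const z ν
  have hP := (hasDerivAt_stdNormalCdf (z + ν)).comp_add_const z ν
  have hQ := (hasDerivAt_stdNormalCdf (z - ν)).comp_sub_const z ν
  have hnum : HasDerivAt (fun z => stdNormalPdf (z - ν) * stdNormalCdf (z + ν) -
      stdNormalPdf (z + ν) * stdNormalCdf (z - ν)) _ z := (hq.mul hP).sub (hp.mul hQ)
  have hden : HasDerivAt (fun z => stdNormalPdf (z + ν) - stdNormalPdf (z - ν)) _ z := hp.sub hq
  refine (hnum.div hden (sub_ne_zero.2 h)).congr_deriv ?_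
  congr 1
  ring

lemma strangleRelativeValue_strictMonoOn {ν : ℝ} (hν : 0 < ν) :
    StrictMonoOn (strangleRelativeValue ν) (Iio 0) := by
  have hpdf : ∀ z < 0, stdNormalPdf (z - ν) < stdNormalPdf (z + ν) := fun z hz =>
    stdNormalPdf_lt_stdNormalPdf_iff.2 (by nlinarith)
  have hderiv : ∀ z < 0, HasDerivAt (strangleRelativeValue ν) _ z := fun z hz =>
    hasDerivAt_strangleRelativeValue (hpdf z hz).ne'
  refine strictMonoOn_of_hasDerivWithinAt_pos (convex_Iio 0)
    (fun z hz => (hderiv z hz).continuousAt.continuousWithinAt)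
    (fun z hz => (hderiv z (interior_subset hz : z ∈ Iio 0)).hasDerivWithinAt) fun z hz => ?_
  rw [interior_Iio, mem_Iio] at hz
  have hcdf : 0 < stdNormalCdf (z + ν) - stdNormalCdf (z - ν) :=
    sub_pos.2 (stdNormalCdf_strictMono (by linarith))
  have hden : stdNormalPdf (z + ν) - stdNormalPdf (z - ν) ≠ 0 := sub_ne_zero.2 (hpdf z hz).ne'
  have hp := stdNormalPdf_pos (z + ν)
  have hq := stdNormalPdf_pos (z - ν)
  positivity

/-- Lemma 1(b): for fixed ν > 0, the relative value
R(z,ν) = (φ(z−ν)Φ(z+ν) − φ(z+ν)Φ(z−ν))/(φ(z+ν) − φ(z−ν)) is strictly increasing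
in z on (−∞, −ν/2). -/
theorem strangle_relative_value_strictMonoOn_z (ν : ℝ) (hν : 0 < ν) :
    StrictMonoOn
      (fun z : ℝ =>
        (stdNormalPdf (z - ν) * stdNormalCdf (z + ν) -
            stdNormalPdf (z + ν) * stdNormalCdf (z - ν)) /
          (stdNormalPdf (z + ν) - stdNormalPdf (z - ν)))
      (Set.Iio (-ν / 2)) :=
  (strangleRelativeValue_strictMonoOn hν).mono (Iio_subset_Iio (by linarith))
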